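/- arXiv:quant-ph/0503202 — 3 statements merged into one kernel-verified Lean document; each statement's English description precedes it below -/
import Mathlib

section
/- Let P = 2^p, θ real, f = Pθ/(2π), and |±⟩ = (|b⟩ ∓ i|g⟩)/√2. Then applying the inverse Fourier transform on the first register to the state (1/√P)∑_{m=0}^{P−1}|m⟩ ⊗ G^m|s⟩ (with G the rotation by θ in the (|b⟩,|g⟩) plane and |s⟩ = cos(θ/2)|b⟩ + sin(θ/2)|g⟩) yields (1/√2)∑_{m'=0}^{P−1} e^{((P−1)/P)πi m'} |m'⟩ ⊗ [ e^{πif} S_{m'+f} |+⟩ + e^{−πif} S_{m'−f} |−⟩ ], where S_x = sin(πx)/(P sin(πx/P)) (interpreted as 1 when x/P ∈ ℤ·P, i.e. as the limit). -/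
open Finset

/-- The eigenvector `|+⟩ = (|b⟩ − i|g⟩)/√2` of the Grover rotation. -/
noncomputable def plusVec {N : ℕ} (b g : Fin N → ℂ) : Fin N → ℂ := fun x =>
  (b x - Complex.I * g x) / (Real.sqrt 2 : ℂ)

/-- The eigenvector `|−⟩ = (|b⟩ + i|g⟩)/√2` of the Grover rotation. -/
noncomputable def minusVec {N : ℕ} (b g : Fin N → ℂ) : Fin N → ℂ := fun x =>
  (b x + Complex.I * g x) / (Real.sqrt 2 : ℂ)

/-- The normalized Dirichlet kernel `S(x) = sin(πx)/(P sin(πx/P))`. -/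
noncomputable def dirichletS (P : ℕ) (x : ℝ) : ℝ :=
  Real.sin (Real.pi * x) / (P * Real.sin (Real.pi * x / P))

lemma cos_sin_decomp (α : ℝ) (u v : ℂ) :
    (Real.cos α : ℂ) * u + (Real.sin α : ℂ) * v
      = Complex.exp ((α:ℂ) * Complex.I) * ((u - Complex.I*v)/2)
        + Complex.exp (-((α:ℂ) * Complex.I)) * ((u + Complex.I*v)/2) := by
  rw [show -((α:ℂ)*Complex.I) = ((-α : ℝ):ℂ)*Complex.I by push_cast; ring,
    Complex.exp_mul_I, Complex.exp_mul_I, ← Complex.ofReal_cos, ← Complex.ofReal_cos,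
    ← Complex.ofReal_sin, ← Complex.ofReal_sin, Real.cos_neg, Real.sin_neg]
  push_cast [← Complex.ofReal_sin, ← Complex.ofReal_cos]
  linear_combination ((Real.sin α : ℂ) * v) * Complex.I_mul_I

lemma exp_geom_sum (P : ℕ) (a : ℝ) (h : Real.sin (a/2) ≠ 0) :
    ∑ m ∈ Finset.range P, Complex.exp ((m : ℂ) * ((a:ℂ) * Complex.I)) =
    Complex.exp (((P : ℂ) - 1) * a * Complex.I / 2) *
      ((Real.sin ((P : ℝ) * a / 2) / Real.sin (a / 2) : ℝ) : ℂ) := by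
  have hI := Complex.I_ne_zero
  have hz : Complex.exp ((a:ℂ) * Complex.I) ≠ 1 := by
    rw [ne_eq, Complex.exp_eq_one_iff]
    push_neg
    intro n hn
    have ha : (a:ℂ) = (n:ℂ) * (2 * Real.pi) :=
      mul_right_cancel₀ hI (by linear_combination hn)
    have ha' : a = n * (2 * Real.pi) := by exact_mod_cast ha
    apply h
    rw [ha', show (n:ℝ) * (2*Real.pi) / 2 = n * Real.pi by ring]
    exact Real.sin_int_mul_pi n
  have key : ∀ t : ℝ, Complex.exp ((t:ℂ) * Complex.I) - 1
      = Complex.exp ((t:ℂ) * Complex.I / 2) * (2 * (Real.sin (t/2) : ℂ) * Complex.I) := by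
    intro t
    have h1 : Complex.exp ((t:ℂ)*Complex.I) =
        Complex.exp ((t:ℂ)*Complex.I/2) * Complex.exp ((t:ℂ)*Complex.I/2) := by
      rw [← Complex.exp_add]; ring_nf
    have h2 : Complex.exp ((t:ℂ)*Complex.I/2) * Complex.exp (-((t:ℂ)*Complex.I/2)) = 1 := by
      rw [← Complex.exp_add]; ring_nf; exact Complex.exp_zero
    have h3 : Complex.exp ((t:ℂ)*Complex.I/2) - Complex.exp (-((t:ℂ)*Complex.I/2))
        = 2 * (Real.sin (t/2) : ℂ) * Complex.I := by
      rw [show (t:ℂ)*Complex.I/2 = ((t/2 : ℝ):ℂ)*Complex.I by push_cast; ring,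
        show -(((t/2 : ℝ):ℂ)*Complex.I) = ((-(t/2) : ℝ):ℂ)*Complex.I by push_cast; ring,
        Complex.exp_mul_I, Complex.exp_mul_I, ← Complex.ofReal_cos, ← Complex.ofReal_cos,
        ← Complex.ofReal_sin, ← Complex.ofReal_sin, Real.cos_neg, Real.sin_neg]
      push_cast [← Complex.ofReal_sin, ← Complex.ofReal_cos]
      ring
    calc Complex.exp ((t:ℂ)*Complex.I) - 1
        = Complex.exp ((t:ℂ)*Complex.I/2) *
          (Complex.exp ((t:ℂ)*Complex.I/2) - Complex.exp (-((t:ℂ)*Complex.I/2))) := by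
          rw [mul_sub, ← h1, h2]
      _ = _ := by rw [h3]
  have hsum : ∀ m : ℕ, Complex.exp ((m : ℂ) * ((a:ℂ) * Complex.I))
      = Complex.exp ((a:ℂ) * Complex.I) ^ m := by
    intro m; rw [← Complex.exp_nat_mul]
  simp_rw [hsum]
  rw [geom_sum_eq hz]
  have hPa : (Complex.exp ((a:ℂ) * Complex.I))^P - 1
      = Complex.exp (((P:ℝ)*a : ℝ) * Complex.I / 2) * (2 * (Real.sin ((P:ℝ)*a/2) : ℂ) * Complex.I) := by
    rw [← Complex.exp_nat_mul]
    rw [show (P:ℂ) * ((a:ℂ)*Complex.I) = (((P:ℝ)*a : ℝ):ℂ) * Complex.I by push_cast; ring]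
    exact key _
  rw [hPa, key a]
  have hs : ((Real.sin (a/2) : ℝ) : ℂ) ≠ 0 := by exact_mod_cast h
  have hD : Complex.exp ((a:ℂ)*Complex.I/2) * (2 * (Real.sin (a/2) : ℂ) * Complex.I) ≠ 0 := by
    apply mul_ne_zero (Complex.exp_ne_zero _)
    exact mul_ne_zero (mul_ne_zero two_ne_zero hs) hI
  rw [div_eq_iff hD, Complex.ofReal_div]
  have hexp : Complex.exp (((P:ℂ)-1)*a*Complex.I/2) * Complex.exp ((a:ℂ)*Complex.I/2)
      = Complex.exp ((((P:ℝ)*a : ℝ):ℂ) * Complex.I / 2) := by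
    rw [← Complex.exp_add]; push_cast; ring_nf
  have hs' : Complex.sin ((a:ℂ) / 2) ≠ 0 := by
    rw [show ((a:ℂ)/2) = ((a/2 : ℝ):ℂ) by push_cast; ring, ← Complex.ofReal_sin]
    exact_mod_cast h
  push_cast [Complex.ofReal_sin] at hexp ⊢
  field_simp [hs']
  linear_combination (norm := ring_nf) (-Complex.sin ((P:ℂ)*a/2)) * hexp

lemma final_combine (EP EM TP TM B F Fm SP SM c2 Q u v : ℂ)
    (hEP : EP * TP = B * F) (hEM : EM * TM = B * Fm)
    (h22 : c2 * c2 = 2) (hc2 : c2 ≠ 0) (hQ : Q ≠ 0) :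
    1/Q * (EP * SP * (TP * ((u - Complex.I*v)/2)) + EM * SM * (TM * ((u + Complex.I*v)/2)))
    = 1/c2 * B * (F * (SP/Q) * ((u - Complex.I*v)/c2) + Fm * (SM/Q) * ((u + Complex.I*v)/c2)) := by
  field_simp
  linear_combination (SP*(u - Complex.I*v)*c2*c2) * hEP + (SM*(u + Complex.I*v)*c2*c2) * hEM
    + (B*F*SP*(u-Complex.I*v) + B*Fm*SM*(u+Complex.I*v)) * h22

/-- Applying the inverse Fourier transform on the first register to the state
`(1/√P)∑_m |m⟩ ⊗ G^m|s⟩` (where `G^m|s⟩ = cos((m+1/2)θ)|b⟩ + sin((m+1/2)θ)|g⟩`) yields, in each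
first-register component `|m'⟩`, the second-register state
`(1/√2) e^{((P−1)/P)πim'} [ e^{πif} S(m'+f)|+⟩ + e^{−πif} S(m'−f)|−⟩ ]` with `f = Pθ/(2π)`. -/
theorem inverse_qft_counting_state (N p : ℕ) (θ : ℝ) (b g : Fin N → ℂ)
    (f : ℝ) (hf : f = (2 ^ p : ℝ) * θ / (2 * Real.pi))
    (m' : ℕ) (hm' : m' < 2 ^ p)
    (h1 : Real.sin (Real.pi * ((m' : ℝ) + f) / 2 ^ p) ≠ 0)
    (h2 : Real.sin (Real.pi * ((m' : ℝ) - f) / 2 ^ p) ≠ 0) :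
    (fun x => (1 / (2 ^ p : ℂ)) * ∑ m ∈ Finset.range (2 ^ p),
        Complex.exp (2 * (Real.pi : ℂ) * Complex.I * (m : ℂ) * (m' : ℂ) / (2 ^ p : ℂ)) *
          ((Real.cos (((m : ℝ) + 1 / 2) * θ) : ℂ) * b x +
            (Real.sin (((m : ℝ) + 1 / 2) * θ) : ℂ) * g x)) =
      fun x => (1 / (Real.sqrt 2 : ℂ)) *
        Complex.exp ((((2 ^ p : ℝ) - 1) / (2 ^ p : ℝ) : ℝ) * (Real.pi : ℂ) * Complex.I * (m' : ℂ)) *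
        (Complex.exp ((Real.pi : ℂ) * Complex.I * (f : ℂ)) *
            (dirichletS (2 ^ p) ((m' : ℝ) + f) : ℂ) * plusVec b g x +
          Complex.exp (-((Real.pi : ℂ) * Complex.I * (f : ℂ))) *
            (dirichletS (2 ^ p) ((m' : ℝ) - f) : ℂ) * minusVec b g x) := by
  have hπ : (Real.pi : ℝ) ≠ 0 := Real.pi_ne_zero
  have hP0 : ((2:ℝ) ^ p) ≠ 0 := by positivity
  have hP0c : ((2:ℂ) ^ p) ≠ 0 := pow_ne_zero p two_ne_zero
  have hθc : 2 * (Real.pi : ℂ) * (f : ℂ) = (2:ℂ)^p * (θ : ℂ) := by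
    have : 2 * Real.pi * f = 2^p * θ := by rw [hf]; field_simp
    exact_mod_cast this
  set aP : ℝ := 2 * Real.pi * ((m' : ℝ) + f) / 2 ^ p with haP
  set aM : ℝ := 2 * Real.pi * ((m' : ℝ) - f) / 2 ^ p with haM
  have hsP : Real.sin (aP / 2) ≠ 0 := by
    rw [show aP / 2 = Real.pi * ((m' : ℝ) + f) / 2 ^ p by rw [haP]; ring]; exact h1
  have hsM : Real.sin (aM / 2) ≠ 0 := by
    rw [show aM / 2 = Real.pi * ((m' : ℝ) - f) / 2 ^ p by rw [haM]; ring]; exact h2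
  funext x
  have hterm : ∀ m ∈ Finset.range (2^p),
      Complex.exp (2 * (Real.pi : ℂ) * Complex.I * (m : ℂ) * (m' : ℂ) / (2 ^ p : ℂ)) *
        ((Real.cos (((m : ℝ) + 1 / 2) * θ) : ℂ) * b x +
          (Real.sin (((m : ℝ) + 1 / 2) * θ) : ℂ) * g x)
      = Complex.exp ((m : ℂ) * ((aP:ℂ) * Complex.I)) *
          (Complex.exp (((θ/2 : ℝ) : ℂ) * Complex.I) * ((b x - Complex.I * g x)/2))
        + Complex.exp ((m : ℂ) * ((aM:ℂ) * Complex.I)) *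
          (Complex.exp (-(((θ/2 : ℝ) : ℂ) * Complex.I)) * ((b x + Complex.I * g x)/2)) := by
    intro m _
    rw [cos_sin_decomp (((m : ℝ) + 1 / 2) * θ) (b x) (g x), mul_add]
    have e1 : Complex.exp (2 * (Real.pi : ℂ) * Complex.I * (m : ℂ) * (m' : ℂ) / (2 ^ p : ℂ)) *
        Complex.exp (((((m : ℝ) + 1 / 2) * θ : ℝ) : ℂ) * Complex.I)
        = Complex.exp ((m : ℂ) * ((aP:ℂ) * Complex.I)) *
          Complex.exp (((θ/2 : ℝ) : ℂ) * Complex.I) := by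
      rw [← Complex.exp_add, ← Complex.exp_add]
      congr 1
      rw [haP]
      push_cast
      field_simp
      linear_combination (-2*(m:ℂ)) * hθc
    have e2 : Complex.exp (2 * (Real.pi : ℂ) * Complex.I * (m : ℂ) * (m' : ℂ) / (2 ^ p : ℂ)) *
        Complex.exp (-((((m : ℝ) + 1 / 2) * θ : ℝ) : ℂ) * Complex.I)
        = Complex.exp ((m : ℂ) * ((aM:ℂ) * Complex.I)) *
          Complex.exp (-(((θ/2 : ℝ) : ℂ) * Complex.I)) := by
      rw [← Complex.exp_add, ← Complex.exp_add]
      congr 1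
      rw [haM]
      push_cast
      field_simp
      linear_combination (2*(m:ℂ)) * hθc
    calc _ = (Complex.exp (2 * (Real.pi : ℂ) * Complex.I * (m : ℂ) * (m' : ℂ) / (2 ^ p : ℂ)) *
          Complex.exp (((((m : ℝ) + 1 / 2) * θ : ℝ) : ℂ) * Complex.I)) * ((b x - Complex.I * g x)/2)
        + (Complex.exp (2 * (Real.pi : ℂ) * Complex.I * (m : ℂ) * (m' : ℂ) / (2 ^ p : ℂ)) *
          Complex.exp (-((((m : ℝ) + 1 / 2) * θ : ℝ) : ℂ) * Complex.I)) * ((b x + Complex.I * g x)/2) := by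
          push_cast; ring
      _ = _ := by rw [e1, e2]; ring
  rw [Finset.sum_congr rfl hterm, Finset.sum_add_distrib, ← Finset.sum_mul, ← Finset.sum_mul,
    exp_geom_sum _ _ hsP, exp_geom_sum _ _ hsM]
  -- Now combine exponentials
  have hEP : Complex.exp ((((2^p : ℕ) : ℂ) - 1) * (aP : ℂ) * Complex.I / 2) *
      Complex.exp (((θ/2 : ℝ) : ℂ) * Complex.I)
      = Complex.exp ((((2 ^ p : ℝ) - 1) / (2 ^ p : ℝ) : ℝ) * (Real.pi : ℂ) * Complex.I * (m' : ℂ)) *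
        Complex.exp ((Real.pi : ℂ) * Complex.I * (f : ℂ)) := by
    rw [← Complex.exp_add, ← Complex.exp_add]
    congr 1
    rw [haP]
    push_cast
    field_simp
    linear_combination (-1:ℂ) * hθc
  have hEM : Complex.exp ((((2^p : ℕ) : ℂ) - 1) * (aM : ℂ) * Complex.I / 2) *
      Complex.exp (-(((θ/2 : ℝ) : ℂ) * Complex.I))
      = Complex.exp ((((2 ^ p : ℝ) - 1) / (2 ^ p : ℝ) : ℝ) * (Real.pi : ℂ) * Complex.I * (m' : ℂ)) *
        Complex.exp (-((Real.pi : ℂ) * Complex.I * (f : ℂ))) := by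
    rw [← Complex.exp_add, ← Complex.exp_add]
    congr 1
    rw [haM]
    push_cast
    field_simp
    linear_combination (1:ℂ) * hθc
  have hdP : (dirichletS (2^p) ((m' : ℝ) + f) : ℝ)
      = Real.sin (((2^p : ℕ) : ℝ) * aP / 2) / Real.sin (aP / 2) / 2^p := by
    rw [dirichletS, haP]
    rw [show ((2^p : ℕ) : ℝ) * (2 * Real.pi * ((m' : ℝ) + f) / 2 ^ p) / 2 = Real.pi * ((m':ℝ) + f) by
      push_cast; field_simp]
    rw [show (2 * Real.pi * ((m' : ℝ) + f) / 2 ^ p) / 2 = Real.pi * ((m':ℝ) + f) / 2^p by ring]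
    push_cast
    field_simp
  have hdM : (dirichletS (2^p) ((m' : ℝ) - f) : ℝ)
      = Real.sin (((2^p : ℕ) : ℝ) * aM / 2) / Real.sin (aM / 2) / 2^p := by
    rw [dirichletS, haM]
    rw [show ((2^p : ℕ) : ℝ) * (2 * Real.pi * ((m' : ℝ) - f) / 2 ^ p) / 2 = Real.pi * ((m':ℝ) - f) by
      push_cast; field_simp]
    rw [show (2 * Real.pi * ((m' : ℝ) - f) / 2 ^ p) / 2 = Real.pi * ((m':ℝ) - f) / 2^p by ring]
    push_cast
    field_simp
  have hs2 : ((Real.sqrt 2 : ℝ) : ℂ) ≠ 0 := by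
    simp [Real.sqrt_eq_zero']
  have h22 : ((Real.sqrt 2 : ℝ) : ℂ) * ((Real.sqrt 2 : ℝ) : ℂ) = 2 := by
    rw [← Complex.ofReal_mul, Real.mul_self_sqrt (by norm_num : (0:ℝ) ≤ 2)]
    norm_num
  have hdPc : ((dirichletS (2^p) ((m' : ℝ) + f) : ℝ) : ℂ)
      = ((Real.sin (((2^p : ℕ) : ℝ) * aP / 2) / Real.sin (aP / 2) : ℝ) : ℂ) / (2^p : ℂ) := by
    rw [hdP]; push_cast; ring
  have hdMc : ((dirichletS (2^p) ((m' : ℝ) - f) : ℝ) : ℂ)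
      = ((Real.sin (((2^p : ℕ) : ℝ) * aM / 2) / Real.sin (aM / 2) : ℝ) : ℂ) / (2^p : ℂ) := by
    rw [hdM]; push_cast; ring
  simp only [plusVec, minusVec]
  rw [hdPc, hdMc]
  exact final_combine _ _ _ _ _ _ _ _ _ _ _ _ _ hEP hEM h22 hs2 hP0c
end

section
/- Let p ≥ 1, P = 2^p, f ∈ (0, P/2) with f and P−f not half-integers of the grid in a degenerate way. Define Prob(m') = (1/2)[S(m'+f)² + S(m'−f)²] where S(x) = sin(πx)/(P sin(πx/P)) (limit value 1 at x ≡ 0 mod P). Then ∑_{m'=0}^{P−1} Prob(m') = 1. -/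
open Finset Complex

lemma normSq_exp_sub_one (φ : ℝ) :
    Complex.normSq (Complex.exp (φ * I) - 1) = 4 * Real.sin (φ / 2) ^ 2 := by
  rw [Complex.exp_mul_I]
  have h1 : Real.cos φ = 1 - 2 * Real.sin (φ / 2) ^ 2 := by
    have := Real.cos_two_mul (φ / 2)
    have h2 := Real.sin_sq_add_cos_sq (φ / 2)
    have : Real.cos (2 * (φ / 2)) = 2 * Real.cos (φ/2) ^ 2 - 1 := this
    rw [show 2 * (φ / 2) = φ by ring] at this
    nlinarith
  simp [Complex.normSq_apply, Complex.cos_ofReal_re, Complex.sin_ofReal_re]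
  nlinarith [Real.sin_sq_add_cos_sq φ]

noncomputable def auxE (P : ℕ) (t : ℝ) : ℂ := Complex.exp ((2 * Real.pi * t / P : ℝ) * I)

lemma dirichletS_sq (P : ℕ) (hP : 0 < P) (x : ℝ) (hx : ∀ n : ℤ, x ≠ n) :
    dirichletS P x ^ 2 =
      Complex.normSq (∑ k ∈ range P, auxE P ((k : ℝ) * x)) / P ^ 2 := by
  simp only [auxE]
  have hP0 : (P : ℝ) ≠ 0 := Nat.cast_ne_zero.mpr hP.ne'
  have hpi : Real.pi ≠ 0 := Real.pi_ne_zero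
  set z : ℂ := Complex.exp ((2 * Real.pi * x / P : ℝ) * I) with hzdef
  have hz : z ≠ 1 := by
    rw [hzdef, Ne, Complex.exp_eq_one_iff]
    rintro ⟨n, hn⟩
    have : ((2 * Real.pi * x / P : ℝ) : ℂ) = ((n : ℝ) * (2 * Real.pi) : ℝ) := by
      apply mul_right_cancel₀ Complex.I_ne_zero
      rw [hn]; push_cast; ring
    have h2 : 2 * Real.pi * x / P = n * (2 * Real.pi) := by exact_mod_cast this
    have hxn : x = (n : ℝ) * P := by
      have h3 : (2 * Real.pi) * x = (2 * Real.pi) * ((n : ℝ) * P) := by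
        field_simp at h2
        rw [h2]; ring
      exact mul_left_cancel₀ (by positivity) h3
    exact hx (n * P) (by rw [hxn]; push_cast; ring)
  have hterm : ∀ k ∈ range P, Complex.exp ((2 * Real.pi * ((k : ℝ) * x) / P : ℝ) * I) = z ^ k := by
    intro k _
    rw [hzdef, ← Complex.exp_nat_mul]
    congr 1
    push_cast
    ring
  rw [Finset.sum_congr rfl hterm, geom_sum_eq hz]
  have hzP : z ^ P = Complex.exp ((2 * Real.pi * x : ℝ) * I) := by
    rw [hzdef, ← Complex.exp_nat_mul]
    congr 1
    have hP0c : (P : ℂ) ≠ 0 := Nat.cast_ne_zero.mpr hP.ne'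
    push_cast
    field_simp
  rw [hzP, Complex.normSq_div, normSq_exp_sub_one, normSq_exp_sub_one]
  have hsin : Real.sin (Real.pi * x / P) ≠ 0 := by
    rw [Ne, Real.sin_eq_zero_iff]
    rintro ⟨n, hn⟩
    apply hx (n * P)
    push_cast
    have h3 : Real.pi * x = Real.pi * ((n : ℝ) * P) := by
      field_simp at hn
      rw [← hn]
    exact mul_left_cancel₀ hpi h3
  rw [dirichletS]
  rw [show 2 * Real.pi * x / 2 = Real.pi * x by ring,
    show 2 * Real.pi * x / P / 2 = Real.pi * x / P by ring]
  field_simp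

lemma auxE_add (P : ℕ) (s t : ℝ) : auxE P (s + t) = auxE P s * auxE P t := by
  rw [auxE, auxE, auxE, ← Complex.exp_add]
  congr 1
  push_cast
  ring

lemma auxE_zero (P : ℕ) : auxE P 0 = 1 := by simp [auxE]

lemma auxE_conj (P : ℕ) (t : ℝ) : (starRingEnd ℂ) (auxE P t) = auxE P (-t) := by
  rw [auxE, auxE, ← Complex.exp_conj]
  congr 1
  rw [map_mul, Complex.conj_I, Complex.conj_ofReal]
  push_cast
  ring

lemma auxE_orth (P : ℕ) (hP : 0 < P) (j : ℤ) (hj : ¬ ((P : ℤ) ∣ j)) :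
    ∑ m ∈ range P, auxE P ((j : ℝ) * m) = 0 := by
  have hpi : Real.pi ≠ 0 := Real.pi_ne_zero
  have hP0 : (P : ℝ) ≠ 0 := Nat.cast_ne_zero.mpr hP.ne'
  have hz1 : auxE P (j : ℝ) ≠ 1 := by
    rw [auxE, Ne, Complex.exp_eq_one_iff]
    rintro ⟨n, hn⟩
    have h1 : ((2 * Real.pi * (j : ℝ) / P : ℝ) : ℂ) = (((n : ℝ) * (2 * Real.pi) : ℝ) : ℂ) := by
      apply mul_right_cancel₀ Complex.I_ne_zero
      rw [hn]; push_cast; ring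
    have h2 : 2 * Real.pi * (j : ℝ) / P = (n : ℝ) * (2 * Real.pi) := by exact_mod_cast h1
    apply hj
    refine ⟨n, ?_⟩
    have h3 : (2 * Real.pi) * (j : ℝ) = (2 * Real.pi) * ((n : ℝ) * P) := by
      field_simp at h2; rw [h2]; ring
    have h4 : (j : ℝ) = ((P * n : ℤ) : ℝ) := by push_cast; have := mul_left_cancel₀ (show (2:ℝ)*Real.pi ≠ 0 by positivity) h3; linarith
    exact_mod_cast h4
  have hterm : ∀ m ∈ range P, auxE P ((j : ℝ) * m) = (auxE P (j : ℝ)) ^ m := by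
    intro m _
    rw [auxE, auxE, ← Complex.exp_nat_mul]
    congr 1
    push_cast
    ring
  rw [Finset.sum_congr rfl hterm, geom_sum_eq hz1]
  have hzP : (auxE P (j : ℝ)) ^ P = 1 := by
    rw [auxE, ← Complex.exp_nat_mul]
    have hPc : (P : ℂ) ≠ 0 := Nat.cast_ne_zero.mpr hP.ne'
    have h5 : (P : ℂ) * (((2 * Real.pi * (j : ℝ) / P : ℝ) : ℂ) * I) = (j : ℂ) * (2 * (Real.pi : ℂ) * I) := by
      push_cast
      field_simp
    rw [h5, Complex.exp_int_mul_two_pi_mul_I]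
  rw [hzP]
  simp

lemma parseval (P : ℕ) (hP : 0 < P) (c : ℝ) :
    ∑ m ∈ range P,
      Complex.normSq (∑ k ∈ range P, auxE P ((k : ℝ) * ((m : ℝ) + c))) = (P : ℝ) ^ 2 := by
  have key : ∑ m ∈ range P,
      ((Complex.normSq (∑ k ∈ range P, auxE P ((k : ℝ) * ((m : ℝ) + c))) : ℝ) : ℂ) = (P : ℂ) ^ 2 := by
    have step1 : ∀ m : ℕ,
        ((Complex.normSq (∑ k ∈ range P, auxE P ((k : ℝ) * ((m : ℝ) + c))) : ℝ) : ℂ)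
          = ∑ k ∈ range P, ∑ l ∈ range P,
              auxE P (((k : ℝ) - (l : ℝ)) * c) * auxE P (((k : ℝ) - (l : ℝ)) * m) := by
      intro m
      rw [← Complex.mul_conj, map_sum, Finset.sum_mul_sum]
      refine Finset.sum_congr rfl fun k _ => Finset.sum_congr rfl fun l _ => ?_
      rw [auxE_conj, ← auxE_add, ← auxE_add]
      congr 1
      ring
    rw [Finset.sum_congr rfl fun m _ => step1 m, Finset.sum_comm]
    have inner : ∀ k ∈ range P,
        ∑ m ∈ range P, ∑ l ∈ range P,
            auxE P (((k : ℝ) - (l : ℝ)) * c) * auxE P (((k : ℝ) - (l : ℝ)) * m) = (P : ℂ) := by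
      intro k hk
      rw [Finset.sum_comm]
      rw [Finset.sum_eq_single k]
      · simp [auxE_zero, mul_comm]
      · intro l hl hlk
        rw [← Finset.mul_sum]
        have hj : ¬ ((P : ℤ) ∣ ((k : ℤ) - (l : ℤ))) := by
          intro hdvd
          have h0 : ((k : ℤ) - (l : ℤ)).natAbs < ((P : ℤ)).natAbs := by
            simp only [Int.natAbs_natCast]
            have := Finset.mem_range.mp hk
            have := Finset.mem_range.mp hl
            omega
          have := Int.eq_zero_of_dvd_of_natAbs_lt_natAbs hdvd h0
          have := Finset.mem_range.mp hk
          omega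
        have horth := auxE_orth P hP ((k : ℤ) - (l : ℤ)) hj
        push_cast at horth
        rw [horth, mul_zero]
      · intro h
        exact absurd hk h
    rw [Finset.sum_congr rfl inner, Finset.sum_const, Finset.card_range, nsmul_eq_mul]
    ring
  exact_mod_cast key

/-- The error-free measurement distribution
`Prob(m') = (1/2)[S(m'+f)² + S(m'−f)²]` of the quantum counting first register sums to `1`
over `m' ∈ {0,…,P−1}`, for `P = 2^p` and non-degenerate `f ∈ (0, P/2)`. -/
theorem counting_distribution_sums_to_one (p : ℕ) (hp : 1 ≤ p) (f : ℝ)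
    (hf0 : 0 < f) (hf2 : f < (2 ^ p : ℝ) / 2) (hfint : ∀ n : ℤ, f ≠ (n : ℝ)) :
    ∑ m' ∈ Finset.range (2 ^ p),
        (1 / 2) * (dirichletS (2 ^ p) ((m' : ℝ) + f) ^ 2 +
          dirichletS (2 ^ p) ((m' : ℝ) - f) ^ 2) = 1 := by
  set P : ℕ := 2 ^ p with hPdef
  have hP : 0 < P := pow_pos (by norm_num) p
  have hP0 : (P : ℝ) ≠ 0 := Nat.cast_ne_zero.mpr hP.ne'
  have h1 : ∀ m' ∈ range P,
      (1 / 2 : ℝ) * (dirichletS P ((m' : ℝ) + f) ^ 2 + dirichletS P ((m' : ℝ) - f) ^ 2)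
        = (1 / 2) * (Complex.normSq (∑ k ∈ range P, auxE P ((k : ℝ) * ((m' : ℝ) + f))) / (P : ℝ) ^ 2
            + Complex.normSq (∑ k ∈ range P, auxE P ((k : ℝ) * ((m' : ℝ) - f))) / (P : ℝ) ^ 2) := by
    intro m' _
    rw [dirichletS_sq P hP _ (fun n hn => hfint (n - m') (by push_cast; linarith [hn])),
      dirichletS_sq P hP _ (fun n hn => hfint (m' - n) (by push_cast; linarith [hn]))]
  rw [Finset.sum_congr rfl h1, ← Finset.mul_sum, Finset.sum_add_distrib,
    ← Finset.sum_div, ← Finset.sum_div]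
  have hA := parseval P hP f
  have hB : ∑ m' ∈ range P,
      Complex.normSq (∑ k ∈ range P, auxE P ((k : ℝ) * ((m' : ℝ) - f))) = (P : ℝ) ^ 2 := by
    simpa [sub_eq_add_neg] using parseval P hP (-f)
  rw [hA, hB]
  field_simp
  norm_num
end

section
/- Let P = 2^p, θ = 2πf/P with f not an integer, and let the rounded value m̃ = round(f). Then the probability |S(m̃ − f)|² ≥ 4/π², where S(x) = sin(πx)/(P sin(πx/P)). Consequently, measuring the first register of the (error-free) quantum counting yields the closest integer to f with probability at least 4/π². -/
open Real

lemma ratio_ge (p : ℕ) (t : ℝ) (ht0 : 0 < t) (ht : t ≤ 1/2) :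
    2 / π ≤ Real.sin (π * t) / (2 ^ p * Real.sin (π * t / 2 ^ p)) := by
  have hπ := Real.pi_pos
  have hP : (1:ℝ) ≤ 2 ^ p := one_le_pow₀ (by norm_num)
  have hP0 : (0:ℝ) < 2 ^ p := by positivity
  have harg0 : 0 < π * t / 2 ^ p := by positivity
  have hargπ : π * t / 2 ^ p < π := by
    rw [div_lt_iff₀ hP0]
    nlinarith
  have hsinpos : 0 < Real.sin (π * t / 2 ^ p) :=
    Real.sin_pos_of_pos_of_lt_pi harg0 hargπ
  have hden : 0 < 2 ^ p * Real.sin (π * t / 2 ^ p) := by positivity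
  have hdenle : 2 ^ p * Real.sin (π * t / 2 ^ p) ≤ π * t := by
    have := Real.sin_le harg0.le
    calc 2 ^ p * Real.sin (π * t / 2 ^ p) ≤ 2 ^ p * (π * t / 2 ^ p) := by
          exact mul_le_mul_of_nonneg_left this hP0.le
      _ = π * t := by field_simp
  have hnum : 2 * t ≤ Real.sin (π * t) := by
    have h1 : 0 ≤ π * t := by positivity
    have h2 : π * t ≤ π / 2 := by nlinarith
    have := Real.mul_le_sin h1 h2
    have hne : π ≠ 0 := ne_of_gt hπ
    calc 2 * t = 2 / π * (π * t) := by field_simp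
      _ ≤ Real.sin (π * t) := this
  rw [le_div_iff₀ hden]
  calc 2 / π * (2 ^ p * Real.sin (π * t / 2 ^ p)) ≤ 2 / π * (π * t) := by
        exact mul_le_mul_of_nonneg_left hdenle (by positivity)
    _ = 2 * t := by field_simp
    _ ≤ Real.sin (π * t) := hnum

/-- For `P = 2^p`, `θ = 2πf/P` with `f` not an integer, and `m̃ = round(f)`, the probability
`|S(m̃ − f)|²` of measuring the closest integer to `f` is at least `4/π²`, where
`S(x) = sin(πx)/(P sin(πx/P))`. -/
theorem closest_integer_probability (p : ℕ) (hp : 1 ≤ p) (θ f : ℝ)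
    (hθ : θ = 2 * Real.pi * f / 2 ^ p) (hf : ∀ n : ℤ, f ≠ (n : ℝ)) :
    (Real.sin (Real.pi * ((round f : ℤ) - f)) /
        (2 ^ p * Real.sin (Real.pi * ((round f : ℤ) - f) / 2 ^ p))) ^ 2 ≥
      4 / Real.pi ^ 2 := by
  have hπ := Real.pi_pos
  set x : ℝ := ((round f : ℤ) : ℝ) - f with hxdef
  have hx0 : x ≠ 0 := by
    intro h
    exact hf (round f) (by linarith [sub_eq_zero.mp h])
  have hxle : |x| ≤ 1/2 := by
    have := abs_sub_round f
    rwa [show x = -(f - (round f : ℤ)) by ring, abs_neg]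
  have hxpos : 0 < |x| := abs_pos.mpr hx0
  have key : 2 / π ≤ Real.sin (π * x) / (2 ^ p * Real.sin (π * x / 2 ^ p)) := by
    rcases hx0.lt_or_gt with hneg | hpos
    · have h := ratio_ge p (-x) (by linarith)
        (by rw [abs_of_neg hneg] at hxle; linarith)
      have e : Real.sin (π * -x) / (2 ^ p * Real.sin (π * -x / 2 ^ p)) =
          Real.sin (π * x) / (2 ^ p * Real.sin (π * x / 2 ^ p)) := by
        rw [mul_neg, neg_div, Real.sin_neg, Real.sin_neg, mul_neg, neg_div_neg_eq]
      rwa [e] at h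
    · exact ratio_ge p x hpos (by rwa [abs_of_pos hpos] at hxle)
  have h2π : (0:ℝ) ≤ 2 / π := by positivity
  have := pow_le_pow_left₀ h2π key 2
  calc 4 / π ^ 2 = (2 / π) ^ 2 := by field_simp; ring
    _ ≤ _ := this
end
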